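/- arXiv:2411.09257 — 2 statements merged into one kernel-verified Lean document; each statement's English description precedes it below -/
import Mathlib

section
/- For every t ≥ 0, the mean of the q-iterated GCP satisfies Σ_{n=0}^∞ n·p^{(q)}(n,t) = (Σ_{j=1}^k jλ_j)·(Π_{i=1}^q Σ_{j_i=1}^{k_i} j_i λ_{ij_i})·t, and its variance satisfies Var = (Σ_{j=1}^k j²λ_j)·(Π_{i=1}^q Σ_{j_i=1}^{k_i} j_i λ_{ij_i})·t + (Σ_{j=1}^k jλ_j)²·(Π_{r=1}^{q−1} (Σ_{j_r=1}^{k_r} j_r λ_{rj_r})²)·(Σ_{j_q=1}^{k_q} j_q² λ_{qj_q})·t + (Σ_{j=1}^k jλ_j)²·Σ_{r=1}^{q−1} (Σ_{j_r=1}^{k_r} j_r² λ_{rj_r})·t·(Π_{l=1}^{r−1} (Σ_{j_l=1}^{k_l} j_l λ_{lj_l})²)·(Π_{i=r+1}^{q} Σ_{j_i=1}^{k_i} j_i λ_{ij_i}); in particular the variance strictly exceeds the mean for t > 0 (the q-iterated GCP is overdispersed). -/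
/-- GCP state probabilities: `p(n,t) = ∑_{Ω(k,n)} ∏_j ((λ_j t)^{x_j}/x_j!) e^{−λ_j t}`,
where index `j : Fin k` encodes jump size `j+1`. -/
noncomputable def gcpPmf (k : ℕ) (lam : Fin k → ℝ) (n : ℕ) (t : ℝ) : ℝ :=
  ∑' x : Fin k → ℕ,
    if (∑ j : Fin k, ((j : ℕ) + 1) * x j) = n then
      ∏ j : Fin k, (lam j * t) ^ (x j) / (Nat.factorial (x j)) * Real.exp (-(lam j * t))
    else 0

/-- State probabilities of the iterated GCP obtained from the base GCP (rates `lam`)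
by successively time-changing with the GCPs in the list (the head of the list is the
outermost subordinator, the one carrying the time argument):
`p^{(i)}(n,t) = ∑_{m=0}^∞ p^{(i−1)}(n,m) p_i(m,t)`, `p^{(0)} = p`. -/
noncomputable def iterGcpPmf (k : ℕ) (lam : Fin k → ℝ) :
    List ((r : ℕ) × (Fin r → ℝ)) → ℕ → ℝ → ℝ
  | [], n, t => gcpPmf k lam n t
  | ⟨r, Lr⟩ :: rest, n, t => ∑' m : ℕ, iterGcpPmf k lam rest n m * gcpPmf r Lr m t

/-- `∑_{j=1}^{r} j ν_j`, the mean jump rate of a GCP with rates `ν`. -/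
noncomputable def meanRate (r : ℕ) (nu : Fin r → ℝ) : ℝ :=
  ∑ j : Fin r, ((j : ℕ) + 1 : ℝ) * nu j

/-- `∑_{j=1}^{r} j² ν_j`, the second-moment jump rate of a GCP with rates `ν`. -/
noncomputable def sqRate (r : ℕ) (nu : Fin r → ℝ) : ℝ :=
  ∑ j : Fin r, ((j : ℕ) + 1 : ℝ) ^ 2 * nu j

open scoped ENNReal Nat
open Finset

/-!
A GCP with rates `λ_j` is the law of `∑_j j X_j` with independent `X_j ∼ Poisson(λ_j t)`, so its
mean and variance are `μ t` and `σ t` with `μ = ∑ j λ_j` and `σ = ∑ j² λ_j`. If a process has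
mean `a s` and variance `b s` at every time `s`, then running it at an independent random time
with mean `μ` and variance `σ` gives, by the law of total variance, mean `a μ` and variance
`b μ + a² σ`. Iterating yields `A_{q+1} = A_q μ_{q+1}` and `B_{q+1} = B_q μ_{q+1} + A_q² σ_{q+1}`,
solved by the closed forms of the statement. Since `μ ≤ σ`, induction gives `A_q ≤ B_q`, and
the term `A_q² σ_{q+1}` makes the inequality strict. All series are nonnegative, so they are
computed in `ℝ≥0∞`, where they can be rearranged freely, and transferred to `ℝ` at the end.
-/

section MeanVar

variable {α β : Type*}

/-- The second moment is recorded as `v + m ^ 2`, since subtraction in `ℝ≥0∞` truncates. -/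
structure HasMeanVar (f X : α → ℝ≥0∞) (m v : ℝ≥0∞) : Prop where
  tsum_eq_one : ∑' a, f a = 1
  tsum_mul_eq : ∑' a, X a * f a = m
  tsum_sq_mul_eq : ∑' a, X a ^ 2 * f a = v + m ^ 2

lemma tsum_mul_tsum_ite_eq [DecidableEq β] {f : α → ℝ≥0∞} (u : α → β) (w : β → ℝ≥0∞) :
    ∑' b, w b * ∑' a, (if u a = b then f a else 0) = ∑' a, w (u a) * f a := by
  simp_rw [← ENNReal.tsum_mul_left]
  rw [ENNReal.tsum_comm]
  congr 1 with a
  simp_rw [mul_ite, mul_zero, eq_comm (a := u a)]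
  exact tsum_ite_eq (u a) fun b => w b * f a

namespace HasMeanVar

variable {f X : α → ℝ≥0∞} {m v : ℝ≥0∞}

lemma ne_top (h : HasMeanVar f X m v) (a : α) : f a ≠ ∞ :=
  ENNReal.ne_top_of_tsum_ne_top (h.tsum_eq_one ▸ ENNReal.one_ne_top) a

lemma const_mul (h : HasMeanVar f X m v) (c : ℝ≥0∞) :
    HasMeanVar f (fun a => c * X a) (c * m) (c ^ 2 * v) where
  tsum_eq_one := h.tsum_eq_one
  tsum_mul_eq := by simp_rw [mul_assoc, ENNReal.tsum_mul_left, h.tsum_mul_eq]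
  tsum_sq_mul_eq := by
    simp_rw [mul_pow, mul_assoc, ENNReal.tsum_mul_left, h.tsum_sq_mul_eq]
    ring

lemma prod {g Y : β → ℝ≥0∞} {m' v' : ℝ≥0∞} (hf : HasMeanVar f X m v)
    (hg : HasMeanVar g Y m' v') :
    HasMeanVar (fun p : α × β => f p.1 * g p.2) (fun p => X p.1 + Y p.2) (m + m') (v + v') where
  tsum_eq_one := by
    simp_rw [ENNReal.tsum_prod', ENNReal.tsum_mul_left, hg.tsum_eq_one, mul_one, hf.tsum_eq_one]
  tsum_mul_eq := by
    have expand (a : α) (b : β) :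
        (X a + Y b) * (f a * g b) = X a * f a * g b + f a * (Y b * g b) := by ring
    simp_rw [ENNReal.tsum_prod', expand, ENNReal.tsum_add, ENNReal.tsum_mul_left,
      hg.tsum_eq_one, hg.tsum_mul_eq, mul_one, ENNReal.tsum_mul_right, hf.tsum_eq_one,
      hf.tsum_mul_eq, one_mul]
  tsum_sq_mul_eq := by
    have expand (a : α) (b : β) : (X a + Y b) ^ 2 * (f a * g b) =
        X a ^ 2 * f a * g b + 2 * (X a * f a) * (Y b * g b) + f a * (Y b ^ 2 * g b) := by ring
    simp_rw [ENNReal.tsum_prod', expand, ENNReal.tsum_add, ENNReal.tsum_mul_left,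
      hg.tsum_eq_one, hg.tsum_mul_eq, hg.tsum_sq_mul_eq, mul_one, ENNReal.tsum_mul_right,
      ENNReal.tsum_mul_left, hf.tsum_eq_one, hf.tsum_mul_eq, hf.tsum_sq_mul_eq]
    ring

lemma comp_equiv (h : HasMeanVar f X m v) (e : β ≃ α) : HasMeanVar (f ∘ e) (X ∘ e) m v where
  tsum_eq_one := (e.tsum_eq f).trans h.tsum_eq_one
  tsum_mul_eq := (e.tsum_eq fun a => X a * f a).trans h.tsum_mul_eq
  tsum_sq_mul_eq := (e.tsum_eq fun a => X a ^ 2 * f a).trans h.tsum_sq_mul_eq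

lemma pi {k : ℕ} {F X : Fin k → α → ℝ≥0∞} {m v : Fin k → ℝ≥0∞}
    (h : ∀ j, HasMeanVar (F j) (X j) (m j) (v j)) :
    HasMeanVar (fun x : Fin k → α => ∏ j, F j (x j)) (fun x => ∑ j, X j (x j))
      (∑ j, m j) (∑ j, v j) := by
  induction k with
  | zero => exact ⟨by simp, by simp, by simp⟩
  | succ k ih =>
    have := ((h 0).prod (ih fun j => h j.succ)).comp_equiv (Fin.consEquiv fun _ => α).symm
    simpa [Fin.prod_univ_succ, Fin.sum_univ_succ, Fin.tail, Function.comp_def] using this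

lemma map [DecidableEq β] (u : α → β) {Y : β → ℝ≥0∞} (h : HasMeanVar f (Y ∘ u) m v) :
    HasMeanVar (fun b => ∑' a, if u a = b then f a else 0) Y m v where
  tsum_eq_one := by simpa using (tsum_mul_tsum_ite_eq u 1).trans (by simpa using h.tsum_eq_one)
  tsum_mul_eq := (tsum_mul_tsum_ite_eq u Y).trans h.tsum_mul_eq
  tsum_sq_mul_eq := (tsum_mul_tsum_ite_eq u (Y ^ 2)).trans h.tsum_sq_mul_eq

lemma mixture {p : α → ℕ → ℝ≥0∞} {g : ℕ → ℝ≥0∞} {a b μ σ : ℝ≥0∞}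
    (hp : ∀ m : ℕ, HasMeanVar (p · m) X (a * m) (b * m)) (hg : HasMeanVar g (↑) μ σ) :
    HasMeanVar (fun n => ∑' m, p n m * g m) X (a * μ) (b * μ + a ^ 2 * σ) := by
  have swap (w : α → ℝ≥0∞) :
      ∑' n, w n * ∑' m, p n m * g m = ∑' m, (∑' n, w n * p n m) * g m := by
    simp_rw [← ENNReal.tsum_mul_left, ← ENNReal.tsum_mul_right, mul_assoc]
    exact ENNReal.tsum_comm
  refine ⟨?_, ?_, ?_⟩
  · simpa [(hp _).tsum_eq_one, hg.tsum_eq_one] using swap 1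
  · simp_rw [swap, (hp _).tsum_mul_eq, mul_assoc, ENNReal.tsum_mul_left, hg.tsum_mul_eq]
  · simp_rw [swap, (hp _).tsum_sq_mul_eq, add_mul, ENNReal.tsum_add, mul_pow, mul_assoc,
      ENNReal.tsum_mul_left, hg.tsum_mul_eq, hg.tsum_sq_mul_eq]
    ring

lemma toReal_moments (h : HasMeanVar f X m v) (hm : m ≠ ∞) (hv : v ≠ ∞) :
    ∑' a, (X a).toReal * (f a).toReal = m.toReal ∧
      ∑' a, (X a).toReal ^ 2 * (f a).toReal = v.toReal + m.toReal ^ 2 := by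
  have hsq : ∑' a, X a ^ 2 * f a ≠ ∞ := by
    rw [h.tsum_sq_mul_eq]; exact ENNReal.add_ne_top.2 ⟨hv, ENNReal.pow_ne_top hm⟩
  constructor
  · rw [← h.tsum_mul_eq, ENNReal.tsum_toReal_eq (ENNReal.ne_top_of_tsum_ne_top
      (h.tsum_mul_eq ▸ hm))]
    simp [ENNReal.toReal_mul]
  · rw [← ENNReal.toReal_pow, ← ENNReal.toReal_add hv (ENNReal.pow_ne_top hm),
      ← h.tsum_sq_mul_eq, ENNReal.tsum_toReal_eq (ENNReal.ne_top_of_tsum_ne_top hsq)]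
    simp [ENNReal.toReal_mul]

end HasMeanVar

end MeanVar

/-- Poisson weights, written as the factors of `gcpPmf` rather than through
`ProbabilityTheory.poissonMeasure`. -/
noncomputable def poissonWeight (c : ℝ) (m : ℕ) : ℝ≥0∞ :=
  ENNReal.ofReal (c ^ m / m ! * Real.exp (-c))

section Poisson

variable {c : ℝ}

lemma hasSum_pow_div_factorial_mul_exp_neg (hc : 0 ≤ c) :
    HasSum (fun m : ℕ => c ^ m / m ! * Real.exp (-c)) 1 := by
  convert ProbabilityTheory.hasSum_one_poissonMeasure ⟨c, hc⟩ using 2 with m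
  change _ = Real.exp (-c) * c ^ m / (m)!
  ring

lemma natCast_add_one_mul_poissonWeight_succ (hc : 0 ≤ c) (m : ℕ) :
    ((m : ℝ≥0∞) + 1) * poissonWeight c (m + 1) = ENNReal.ofReal c * poissonWeight c m := by
  have hreal : ((m : ℝ) + 1) * (c ^ (m + 1) / (m + 1)! * Real.exp (-c)) =
      c * (c ^ m / m ! * Real.exp (-c)) := by
    rw [Nat.factorial_succ, Nat.cast_mul, pow_succ]
    field_simp
    push_cast
    ring
  rw [poissonWeight, poissonWeight, ← ENNReal.ofReal_natCast, ← ENNReal.ofReal_one,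
    ← ENNReal.ofReal_add (by positivity) zero_le_one, ← ENNReal.ofReal_mul (by positivity),
    ← ENNReal.ofReal_mul hc, hreal]

lemma hasMeanVar_poissonWeight (hc : 0 ≤ c) :
    HasMeanVar (poissonWeight c) (↑) (ENNReal.ofReal c) (ENNReal.ofReal c) := by
  have mass : ∑' m, poissonWeight c m = 1 := by
    have h := hasSum_pow_div_factorial_mul_exp_neg hc
    simp_rw [poissonWeight, ← ENNReal.ofReal_tsum_of_nonneg (fun m => by positivity) h.summable,
      h.tsum_eq, ENNReal.ofReal_one]
  have succ := natCast_add_one_mul_poissonWeight_succ hc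
  have mean : ∑' m : ℕ, (m : ℝ≥0∞) * poissonWeight c m = ENNReal.ofReal c := by
    rw [tsum_eq_zero_add' ENNReal.summable]
    simp_rw [Nat.cast_succ, succ, ENNReal.tsum_mul_left, mass]
    simp
  have sq_succ (m : ℕ) : ((m + 1 : ℕ) : ℝ≥0∞) ^ 2 * poissonWeight c (m + 1) =
      ENNReal.ofReal c * ((m : ℝ≥0∞) * poissonWeight c m) +
        ENNReal.ofReal c * poissonWeight c m := by
    rw [Nat.cast_succ, sq, mul_assoc, succ]
    ring
  refine ⟨mass, mean, ?_⟩
  rw [tsum_eq_zero_add' ENNReal.summable]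
  simp_rw [sq_succ, ENNReal.tsum_add, ENNReal.tsum_mul_left, mean, mass]
  simp
  ring

end Poisson

noncomputable def gcpWeight (k : ℕ) (lam : Fin k → ℝ) (n : ℕ) (t : ℝ) : ℝ≥0∞ :=
  ∑' x : Fin k → ℕ,
    if (∑ j : Fin k, ((j : ℕ) + 1) * x j) = n then ∏ j, poissonWeight (lam j * t) (x j) else 0

section Gcp

variable {k : ℕ} {lam : Fin k → ℝ} {t : ℝ}

lemma sum_natCast_mul_ofReal {ι : Type*} [Fintype ι] (a : ι → ℕ) {b : ι → ℝ}
    (hb : ∀ j, 0 ≤ b j) :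
    ∑ j, (a j : ℝ≥0∞) * ENNReal.ofReal (b j) = ENNReal.ofReal (∑ j, (a j : ℝ) * b j) := by
  rw [ENNReal.ofReal_sum_of_nonneg fun j _ => mul_nonneg (Nat.cast_nonneg _) (hb j)]
  simp [ENNReal.ofReal_mul]

lemma hasMeanVar_gcpWeight (hlam : ∀ j, 0 ≤ lam j) (ht : 0 ≤ t) :
    HasMeanVar (gcpWeight k lam · t) (↑) (ENNReal.ofReal (meanRate k lam * t))
      (ENNReal.ofReal (sqRate k lam * t)) := by
  have hc (j : Fin k) : 0 ≤ lam j * t := mul_nonneg (hlam j) ht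
  have h := HasMeanVar.pi fun j : Fin k =>
    (hasMeanVar_poissonWeight (hc j)).const_mul (((j : ℕ) + 1 : ℕ) : ℝ≥0∞)
  have hX : (fun x : Fin k → ℕ => ∑ j : Fin k, (((j : ℕ) + 1 : ℕ) : ℝ≥0∞) * (x j : ℝ≥0∞)) =
      (↑) ∘ fun x : Fin k → ℕ => ∑ j : Fin k, ((j : ℕ) + 1) * x j := by
    funext x
    simp only [Function.comp_apply, Nat.cast_sum, Nat.cast_mul]
  have hm : ∑ j : Fin k, (((j : ℕ) + 1 : ℕ) : ℝ≥0∞) * ENNReal.ofReal (lam j * t) =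
      ENNReal.ofReal (meanRate k lam * t) := by
    rw [sum_natCast_mul_ofReal _ hc, meanRate, Finset.sum_mul]
    push_cast
    simp_rw [mul_assoc]
  have hv : ∑ j : Fin k, (((j : ℕ) + 1 : ℕ) : ℝ≥0∞) ^ 2 * ENNReal.ofReal (lam j * t) =
      ENNReal.ofReal (sqRate k lam * t) := by
    simp_rw [← Nat.cast_pow]
    rw [sum_natCast_mul_ofReal _ hc, sqRate, Finset.sum_mul]
    push_cast
    simp_rw [mul_assoc]
  rw [hX, hm, hv] at h
  exact h.map _

lemma gcpPmf_eq_toReal (hlam : ∀ j, 0 ≤ lam j) (ht : 0 ≤ t) (n : ℕ) :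
    gcpPmf k lam n t = (gcpWeight k lam n t).toReal := by
  rw [gcpPmf, gcpWeight, ENNReal.tsum_toReal_eq fun x => by
    split_ifs
    exacts [ENNReal.prod_ne_top fun j _ => ENNReal.ofReal_ne_top, ENNReal.zero_ne_top]]
  congr 1 with x
  split_ifs
  · rw [ENNReal.toReal_prod]
    refine Finset.prod_congr rfl fun j _ => (ENNReal.toReal_ofReal ?_).symm
    have := mul_nonneg (hlam j) ht
    positivity
  · rfl

end Gcp

section Rates

lemma meanRate_nonneg {r : ℕ} {nu : Fin r → ℝ} (hnu : ∀ j, 0 ≤ nu j) : 0 ≤ meanRate r nu :=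
  Finset.sum_nonneg fun j _ => mul_nonneg (by positivity) (hnu j)

lemma sqRate_nonneg {r : ℕ} {nu : Fin r → ℝ} (hnu : ∀ j, 0 ≤ nu j) : 0 ≤ sqRate r nu :=
  Finset.sum_nonneg fun j _ => mul_nonneg (by positivity) (hnu j)

lemma meanRate_pos {r : ℕ} (hr : 0 < r) {nu : Fin r → ℝ} (hnu : ∀ j, 0 < nu j) :
    0 < meanRate r nu :=
  Finset.sum_pos (fun j _ => mul_pos (by positivity) (hnu j)) ⟨⟨0, hr⟩, Finset.mem_univ _⟩

lemma sqRate_pos {r : ℕ} (hr : 0 < r) {nu : Fin r → ℝ} (hnu : ∀ j, 0 < nu j) :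
    0 < sqRate r nu :=
  Finset.sum_pos (fun j _ => mul_pos (by positivity) (hnu j)) ⟨⟨0, hr⟩, Finset.mem_univ _⟩

lemma meanRate_le_sqRate {r : ℕ} {nu : Fin r → ℝ} (hnu : ∀ j, 0 ≤ nu j) :
    meanRate r nu ≤ sqRate r nu :=
  Finset.sum_le_sum fun j _ => mul_le_mul_of_nonneg_right
    (le_self_pow₀ (by simp) two_ne_zero) (hnu j)

end Rates

noncomputable def subordinate (p q : ℕ → ℝ → ℝ≥0∞) (n : ℕ) (t : ℝ) : ℝ≥0∞ :=
  ∑' m : ℕ, p n m * q m t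

def HasLinearMeanVar (p : ℕ → ℝ → ℝ≥0∞) (a b : ℝ≥0∞) : Prop :=
  ∀ t, 0 ≤ t → HasMeanVar (p · t) (↑) (a * ENNReal.ofReal t) (b * ENNReal.ofReal t)

lemma HasLinearMeanVar.subordinate {p q : ℕ → ℝ → ℝ≥0∞} {a b a' b' : ℝ≥0∞}
    (hp : HasLinearMeanVar p a b) (hq : HasLinearMeanVar q a' b') :
    HasLinearMeanVar (subordinate p q) (a * a') (b * a' + a ^ 2 * b') := by
  intro t ht
  have hp' (m : ℕ) : HasMeanVar (p · m) (↑) (a * m) (b * m) := by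
    simpa using hp m m.cast_nonneg
  rw [mul_assoc, add_mul, mul_assoc, mul_assoc]
  exact HasMeanVar.mixture hp' (hq t ht)

lemma hasLinearMeanVar_gcpWeight {k : ℕ} {lam : Fin k → ℝ} (hlam : ∀ j, 0 ≤ lam j) :
    HasLinearMeanVar (gcpWeight k lam) (ENNReal.ofReal (meanRate k lam))
      (ENNReal.ofReal (sqRate k lam)) := by
  intro t ht
  simpa only [ENNReal.ofReal_mul (meanRate_nonneg hlam), ENNReal.ofReal_mul (sqRate_nonneg hlam)]
    using hasMeanVar_gcpWeight hlam ht

lemma sum_mul_prod_Icc_succ_top {M : Type*} [CommSemiring M] (f g : ℕ → M) (q : ℕ) :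
    ∑ r ∈ Icc 1 q, f r * ∏ i ∈ Icc (r + 1) (q + 1), g i =
      (∑ r ∈ Icc 1 q, f r * ∏ i ∈ Icc (r + 1) q, g i) * g (q + 1) := by
  rw [Finset.sum_mul]
  refine Finset.sum_congr rfl fun r hr => ?_
  rw [Finset.prod_Icc_succ_top (by simp at hr; omega), mul_assoc]

lemma forall_mem_Icc_one_add_one_iff {p : ℕ → Prop} {q : ℕ} :
    (∀ i ∈ Icc 1 (q + 1), p i) ↔ p (q + 1) ∧ ∀ i ∈ Icc 1 q, p i := by
  rw [← Finset.insert_Icc_right_eq_Icc_add_one (by omega), Finset.forall_mem_insert]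

section IteratedRates

variable (k : ℕ) (lam : Fin k → ℝ) (K : ℕ → ℕ) (L : (i : ℕ) → Fin (K i) → ℝ)

noncomputable def iterMeanRate (q : ℕ) : ℝ :=
  meanRate k lam * ∏ i ∈ Icc 1 q, meanRate (K i) (L i)

noncomputable def iterVarRate (q : ℕ) : ℝ :=
  sqRate k lam * ∏ i ∈ Icc 1 q, meanRate (K i) (L i) +
    meanRate k lam ^ 2 * ∑ r ∈ Icc 1 q, sqRate (K r) (L r) *
      (∏ l ∈ Icc 1 (r - 1), meanRate (K l) (L l) ^ 2) * ∏ i ∈ Icc (r + 1) q, meanRate (K i) (L i)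

lemma iterMeanRate_succ (q : ℕ) :
    iterMeanRate k lam K L (q + 1) =
      iterMeanRate k lam K L q * meanRate (K (q + 1)) (L (q + 1)) := by
  rw [iterMeanRate, iterMeanRate, Finset.prod_Icc_succ_top (by omega), mul_assoc]

lemma iterVarRate_succ (q : ℕ) :
    iterVarRate k lam K L (q + 1) =
      iterVarRate k lam K L q * meanRate (K (q + 1)) (L (q + 1)) +
        iterMeanRate k lam K L q ^ 2 * sqRate (K (q + 1)) (L (q + 1)) := by
  rw [iterVarRate, iterVarRate, iterMeanRate, Finset.prod_Icc_succ_top (by omega),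
    Finset.sum_Icc_succ_top (by omega), sum_mul_prod_Icc_succ_top,
    Finset.Icc_eq_empty_of_lt (Nat.lt_succ_self (q + 1)), Finset.prod_empty, Nat.add_sub_cancel,
    mul_pow, Finset.prod_pow]
  ring

lemma iterVarRate_mul_eq {q : ℕ} (hq : 0 < q) (t : ℝ) :
    iterVarRate k lam K L q * t =
      sqRate k lam * (∏ i ∈ Icc 1 q, meanRate (K i) (L i)) * t +
        meanRate k lam ^ 2 * (∏ r ∈ Icc 1 (q - 1), meanRate (K r) (L r) ^ 2) *
          sqRate (K q) (L q) * t +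
        meanRate k lam ^ 2 *
          ∑ r ∈ Icc 1 (q - 1),
            sqRate (K r) (L r) * t * (∏ l ∈ Icc 1 (r - 1), meanRate (K l) (L l) ^ 2) *
              (∏ i ∈ Icc (r + 1) q, meanRate (K i) (L i)) := by
  obtain ⟨q, rfl⟩ := Nat.exists_eq_add_one_of_ne_zero hq.ne'
  have pull_t : ∑ r ∈ Icc 1 q, sqRate (K r) (L r) * t *
        (∏ l ∈ Icc 1 (r - 1), meanRate (K l) (L l) ^ 2) *
          ∏ i ∈ Icc (r + 1) (q + 1), meanRate (K i) (L i) =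
      (∑ r ∈ Icc 1 q, sqRate (K r) (L r) * (∏ l ∈ Icc 1 (r - 1), meanRate (K l) (L l) ^ 2) *
          ∏ i ∈ Icc (r + 1) (q + 1), meanRate (K i) (L i)) * t := by
    rw [Finset.sum_mul]
    exact Finset.sum_congr rfl fun r _ => by ring
  rw [Nat.add_sub_cancel, pull_t, iterVarRate, Finset.sum_Icc_succ_top (by omega),
    Icc_eq_empty_of_lt (Nat.lt_succ_self (q + 1)), Finset.prod_empty, Nat.add_sub_cancel]
  ring

end IteratedRates

section IteratedRateBounds

variable {k : ℕ} {lam : Fin k → ℝ} {K : ℕ → ℕ} {L : (i : ℕ) → Fin (K i) → ℝ}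

lemma iterMeanRate_nonneg (hlam : ∀ j, 0 ≤ lam j) {q : ℕ}
    (hL : ∀ i ∈ Icc 1 q, ∀ j, 0 ≤ L i j) : 0 ≤ iterMeanRate k lam K L q :=
  mul_nonneg (meanRate_nonneg hlam) (Finset.prod_nonneg fun i hi => meanRate_nonneg (hL i hi))

lemma iterMeanRate_pos (hk : 0 < k) (hlam : ∀ j, 0 < lam j) {q : ℕ}
    (hK : ∀ i ∈ Icc 1 q, 0 < K i) (hL : ∀ i ∈ Icc 1 q, ∀ j, 0 < L i j) :
    0 < iterMeanRate k lam K L q :=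
  mul_pos (meanRate_pos hk hlam) (Finset.prod_pos fun i hi => meanRate_pos (hK i hi) (hL i hi))

lemma iterMeanRate_le_iterVarRate (hlam : ∀ j, 0 ≤ lam j) {q : ℕ}
    (hL : ∀ i ∈ Icc 1 q, ∀ j, 0 ≤ L i j) :
    iterMeanRate k lam K L q ≤ iterVarRate k lam K L q := by
  induction q with
  | zero => simpa [iterMeanRate, iterVarRate] using meanRate_le_sqRate hlam
  | succ q ih =>
    obtain ⟨hLq, hL⟩ := forall_mem_Icc_one_add_one_iff.1 hL
    rw [iterMeanRate_succ, iterVarRate_succ]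
    exact le_add_of_le_of_nonneg (mul_le_mul_of_nonneg_right (ih hL) (meanRate_nonneg hLq))
      (mul_nonneg (sq_nonneg _) (sqRate_nonneg hLq))

lemma iterVarRate_nonneg (hlam : ∀ j, 0 ≤ lam j) {q : ℕ}
    (hL : ∀ i ∈ Icc 1 q, ∀ j, 0 ≤ L i j) : 0 ≤ iterVarRate k lam K L q :=
  (iterMeanRate_nonneg hlam hL).trans (iterMeanRate_le_iterVarRate hlam hL)

lemma iterMeanRate_lt_iterVarRate (hk : 0 < k) (hlam : ∀ j, 0 < lam j) {q : ℕ} (hq : 0 < q)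
    (hK : ∀ i ∈ Icc 1 q, 0 < K i) (hL : ∀ i ∈ Icc 1 q, ∀ j, 0 < L i j) :
    iterMeanRate k lam K L q < iterVarRate k lam K L q := by
  obtain ⟨q, rfl⟩ := Nat.exists_eq_add_one_of_ne_zero hq.ne'
  obtain ⟨hKq, hK⟩ := forall_mem_Icc_one_add_one_iff.1 hK
  obtain ⟨hLq, hL⟩ := forall_mem_Icc_one_add_one_iff.1 hL
  rw [iterMeanRate_succ, iterVarRate_succ]
  exact lt_add_of_le_of_pos
    (mul_le_mul_of_nonneg_right (iterMeanRate_le_iterVarRate (fun j => (hlam j).le)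
      fun i hi j => (hL i hi j).le) (meanRate_pos hKq hLq).le)
    (mul_pos (pow_pos (iterMeanRate_pos hk hlam hK hL) 2) (sqRate_pos hKq hLq))

end IteratedRateBounds

section IteratedGcp

variable (k : ℕ) (lam : Fin k → ℝ) (K : ℕ → ℕ) (L : (i : ℕ) → Fin (K i) → ℝ)

noncomputable def iterGcpWeight : ℕ → ℕ → ℝ → ℝ≥0∞
  | 0 => gcpWeight k lam
  | q + 1 => subordinate (iterGcpWeight q) (gcpWeight (K (q + 1)) (L (q + 1)))

def subordinatorList (q : ℕ) : List ((r : ℕ) × (Fin r → ℝ)) :=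
  ((List.range q).map fun i => (⟨K (i + 1), L (i + 1)⟩ : (r : ℕ) × (Fin r → ℝ))).reverse

lemma subordinatorList_succ (q : ℕ) :
    subordinatorList K L (q + 1) = ⟨K (q + 1), L (q + 1)⟩ :: subordinatorList K L q := by
  simp [subordinatorList, List.range_succ]

variable {k lam K L}

lemma hasLinearMeanVar_iterGcpWeight (hlam : ∀ j, 0 ≤ lam j) {q : ℕ}
    (hL : ∀ i ∈ Icc 1 q, ∀ j, 0 ≤ L i j) :
    HasLinearMeanVar (iterGcpWeight k lam K L q) (ENNReal.ofReal (iterMeanRate k lam K L q))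
      (ENNReal.ofReal (iterVarRate k lam K L q)) := by
  induction q with
  | zero =>
    simpa [iterGcpWeight, iterMeanRate, iterVarRate] using hasLinearMeanVar_gcpWeight hlam
  | succ q ih =>
    obtain ⟨hLq, hL⟩ := forall_mem_Icc_one_add_one_iff.1 hL
    have hA := iterMeanRate_nonneg hlam hL
    rw [iterMeanRate_succ, iterVarRate_succ, ENNReal.ofReal_mul hA,
      ENNReal.ofReal_add (mul_nonneg (iterVarRate_nonneg hlam hL) (meanRate_nonneg hLq))
        (mul_nonneg (sq_nonneg _) (sqRate_nonneg hLq)),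
      ENNReal.ofReal_mul (iterVarRate_nonneg hlam hL), ENNReal.ofReal_mul (sq_nonneg _),
      ENNReal.ofReal_pow hA]
    exact (ih hL).subordinate (hasLinearMeanVar_gcpWeight hLq)

lemma toReal_subordinate {p q : ℕ → ℝ → ℝ≥0∞} {n : ℕ} {t : ℝ} (hp : ∀ m : ℕ, p n m ≠ ∞)
    (hq : ∀ m, q m t ≠ ∞) :
    (subordinate p q n t).toReal = ∑' m : ℕ, (p n m).toReal * (q m t).toReal := by
  rw [subordinate, ENNReal.tsum_toReal_eq fun m => ENNReal.mul_ne_top (hp m) (hq m)]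
  simp_rw [ENNReal.toReal_mul]

lemma iterGcpPmf_eq_toReal (hlam : ∀ j, 0 ≤ lam j) {q : ℕ}
    (hL : ∀ i ∈ Icc 1 q, ∀ j, 0 ≤ L i j) {t : ℝ} (ht : 0 ≤ t) (n : ℕ) :
    iterGcpPmf k lam (subordinatorList K L q) n t = (iterGcpWeight k lam K L q n t).toReal := by
  induction q generalizing t with
  | zero => exact gcpPmf_eq_toReal hlam ht n
  | succ q ih =>
    obtain ⟨hLq, hL⟩ := forall_mem_Icc_one_add_one_iff.1 hL
    rw [subordinatorList_succ, iterGcpPmf, iterGcpWeight, toReal_subordinate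
      (fun m => (hasLinearMeanVar_iterGcpWeight hlam hL m m.cast_nonneg).ne_top n)
      ((hasMeanVar_gcpWeight hLq ht).ne_top)]
    simp_rw [ih hL (Nat.cast_nonneg _), gcpPmf_eq_toReal hLq ht]

lemma iterGcpPmf_moments (hlam : ∀ j, 0 ≤ lam j) {q : ℕ}
    (hL : ∀ i ∈ Icc 1 q, ∀ j, 0 ≤ L i j) {t : ℝ} (ht : 0 ≤ t) :
    ∑' n : ℕ, (n : ℝ) * iterGcpPmf k lam (subordinatorList K L q) n t =
        iterMeanRate k lam K L q * t ∧
      ∑' n : ℕ, (n : ℝ) ^ 2 * iterGcpPmf k lam (subordinatorList K L q) n t =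
        iterVarRate k lam K L q * t + (iterMeanRate k lam K L q * t) ^ 2 := by
  have h := (hasLinearMeanVar_iterGcpWeight hlam hL t ht).toReal_moments
    (ENNReal.mul_ne_top ENNReal.ofReal_ne_top ENNReal.ofReal_ne_top)
    (ENNReal.mul_ne_top ENNReal.ofReal_ne_top ENNReal.ofReal_ne_top)
  simpa [iterGcpPmf_eq_toReal hlam hL ht, ENNReal.toReal_ofReal ht,
    ENNReal.toReal_ofReal (iterMeanRate_nonneg hlam hL),
    ENNReal.toReal_ofReal (iterVarRate_nonneg hlam hL)] using h

end IteratedGcp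

/-- mean and variance of the `q`-iterated GCP, and overdispersion.
The `i`-th subordinating GCP (`i = 1,…,q`) has `K i` jump rates `L i ·`. -/
theorem iterGcp_mean_var (k : ℕ) (hk : 0 < k) (lam : Fin k → ℝ) (hlam : ∀ j, 0 < lam j)
    (q : ℕ) (hq : 0 < q) (K : ℕ → ℕ) (hK : ∀ i ∈ Finset.Icc 1 q, 0 < K i)
    (L : (i : ℕ) → Fin (K i) → ℝ) (hL : ∀ i ∈ Finset.Icc 1 q, ∀ j, 0 < L i j)
    (t : ℝ) (ht : 0 ≤ t)
    (P : ℕ → ℝ → ℝ)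
    (hP : P = iterGcpPmf k lam
      (((List.range q).map fun i => (⟨K (i + 1), L (i + 1)⟩ : (r : ℕ) × (Fin r → ℝ))).reverse)) :
    (∑' n : ℕ, (n : ℝ) * P n t =
      meanRate k lam * (∏ i ∈ Finset.Icc 1 q, meanRate (K i) (L i)) * t) ∧
    (∑' n : ℕ, (n : ℝ) ^ 2 * P n t - (∑' n : ℕ, (n : ℝ) * P n t) ^ 2 =
      sqRate k lam * (∏ i ∈ Finset.Icc 1 q, meanRate (K i) (L i)) * t +
        (meanRate k lam) ^ 2 * (∏ r ∈ Finset.Icc 1 (q - 1), (meanRate (K r) (L r)) ^ 2) *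
          sqRate (K q) (L q) * t +
        (meanRate k lam) ^ 2 *
          ∑ r ∈ Finset.Icc 1 (q - 1),
            sqRate (K r) (L r) * t * (∏ l ∈ Finset.Icc 1 (r - 1), (meanRate (K l) (L l)) ^ 2) *
              (∏ i ∈ Finset.Icc (r + 1) q, meanRate (K i) (L i))) ∧
    (0 < t →
      ∑' n : ℕ, (n : ℝ) * P n t <
        ∑' n : ℕ, (n : ℝ) ^ 2 * P n t - (∑' n : ℕ, (n : ℝ) * P n t) ^ 2) := by
  obtain ⟨hmean, hsq⟩ := iterGcpPmf_moments (fun j => (hlam j).le)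
    (fun i hi j => (hL i hi j).le) ht
  change P = iterGcpPmf k lam (subordinatorList K L q) at hP
  subst hP
  rw [hsq, hmean, add_sub_cancel_right]
  exact ⟨rfl, iterVarRate_mul_eq k lam K L hq t, fun htpos =>
    mul_lt_mul_of_pos_right (iterMeanRate_lt_iterVarRate hk hlam hq hK hL) htpos⟩
end

section
/- For every real u with |u| ≤ 1 and t ≥ 0, E[u^D] = exp(−t Σ_{j₀=1}^{k₀} μ_{j₀} (1 − exp(−j₀ Σ_{j=1}^k λ_j Σ_{i=1}^∞ α_i^{*(j)} (1 − u^i)))). -/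
open MeasureTheory ProbabilityTheory

/-- IGCP state probabilities: `p̂(n,t) = ∑_{s=0}^∞ p(n,s) p₀(s,t)`. -/
noncomputable def igcpPmf (k : ℕ) (lam : Fin k → ℝ) (k0 : ℕ) (mu : Fin k0 → ℝ)
    (n : ℕ) (t : ℝ) : ℝ :=
  ∑' s : ℕ, gcpPmf k lam n s * gcpPmf k0 mu s t

/-- The `j`-fold convolution of a pmf `a` on ℕ:
`a_i^{*(j)} = ∑_{r₁+⋯+r_j = i} a_{r₁} a_{r₂} ⋯ a_{r_j}`. -/
noncomputable def pmfConv (a : ℕ → ℝ) (j : ℕ) (i : ℕ) : ℝ :=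
  ∑' r : Fin j → ℕ, if (∑ m : Fin j, r m) = i then ∏ m : Fin j, a (r m) else 0

theorem hasSum_fin_pi_prod {β : Type*} :
    ∀ {K : ℕ} {f : Fin K → β → ℝ}, (∀ j, Summable fun b => |f j b|) →
      HasSum (fun x : Fin K → β => ∏ j, f j (x j)) (∏ j, ∑' b, f j b)
  | 0, f, _ => by simp
  | K + 1, f, hf => by
    have htail := hasSum_fin_pi_prod (K := K) (f := fun j => f j.succ) fun j => hf j.succ
    have htail_abs := hasSum_fin_pi_prod (K := K) (f := fun j b => |f j.succ b|)
      fun j => by simp [hf j.succ]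
    have hhead : Summable fun b => ‖f 0 b‖ := hf 0
    have htail_norm : Summable fun y : Fin K → β => ‖∏ j, f j.succ (y j)‖ := by
      simpa [Real.norm_eq_abs, Finset.abs_prod] using htail_abs.summable
    have hpair := (summable_mul_of_summable_norm hhead htail_norm).hasSum
    rw [← tsum_mul_tsum_of_summable_norm hhead htail_norm, htail.tsum_eq] at hpair
    rw [Fin.prod_univ_succ, ← (Fin.consEquiv fun _ => β).hasSum_iff]
    have hcons : (fun x => ∏ j, f j (x j)) ∘ Fin.consEquiv (fun _ => β)
        = fun p => f 0 p.1 * ∏ j, f j.succ (p.2 j) := by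
      funext p
      simp [Fin.consEquiv, Fin.prod_univ_succ]
    rwa [hcons]

theorem hasSum_tsum_fiber_ite {α γ : Type*} [DecidableEq γ] {h : α → ℝ} {s : ℝ}
    (hh : HasSum h s) (N : α → γ) :
    HasSum (fun n => ∑' x, if N x = n then h x else 0) s := by
  have hfiber (n : γ) : ∑' x : N ⁻¹' {n}, h x = ∑' x, if N x = n then h x else 0 := by
    rw [tsum_subtype]
    simp only [Set.indicator, Set.mem_preimage, Set.mem_singleton_iff]
  simpa only [hfiber] using hh.tsum_fiberwise N

theorem hasSum_tsum_linear_fiber_mul_pow {K : ℕ} (c : Fin K → ℕ) {w : Fin K → ℕ → ℝ}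
    (hw : ∀ j, Summable fun m => |w j m|) {v : ℝ} (hv : |v| ≤ 1) :
    HasSum (fun n => (∑' x : Fin K → ℕ,
        if ∑ j, c j * x j = n then ∏ j, w j (x j) else 0) * v ^ n)
      (∏ j, ∑' m, w j m * (v ^ c j) ^ m) := by
  have hwv (j : Fin K) : Summable fun m => |w j m * (v ^ c j) ^ m| := by
    refine (hw j).of_nonneg_of_le (fun _ => abs_nonneg _) fun m => ?_
    rw [abs_mul, ← pow_mul, abs_pow]
    exact mul_le_of_le_one_right (abs_nonneg _) (pow_le_one₀ (abs_nonneg v) hv)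
  refine (hasSum_tsum_fiber_ite (hasSum_fin_pi_prod hwv) (fun x => ∑ j, c j * x j)).congr_fun
    fun n => ?_
  rw [← tsum_mul_right]
  refine tsum_congr fun x => ?_
  split_ifs with hx
  · simp only [Finset.prod_mul_distrib, ← pow_mul, Finset.prod_pow_eq_pow_sum, hx]
  · exact zero_mul _

theorem hasSum_poisson_mul_pow (r z : ℝ) :
    HasSum (fun m : ℕ => r ^ m / m.factorial * Real.exp (-r) * z ^ m)
      (Real.exp (-(r * (1 - z)))) := by
  have h := (NormedSpace.expSeries_div_hasSum_exp (r * z)).mul_right (Real.exp (-r))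
  rw [← Real.exp_eq_exp_ℝ, ← Real.exp_add, show r * z + -r = -(r * (1 - z)) by ring] at h
  exact h.congr_fun fun m => by ring

theorem hasSum_gcpPmf_mul_pow {k : ℕ} (lam : Fin k → ℝ) (s : ℝ) {v : ℝ} (hv : |v| ≤ 1) :
    HasSum (fun n => gcpPmf k lam n s * v ^ n)
      (Real.exp (-(s * ∑ j : Fin k, lam j * (1 - v ^ ((j : ℕ) + 1))))) := by
  have hw (j : Fin k) :
      Summable fun m => |(lam j * s) ^ m / m.factorial * Real.exp (-(lam j * s))| :=
    ((Real.summable_pow_div_factorial _).mul_right _).abs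
  have h := hasSum_tsum_linear_fiber_mul_pow (fun j => (j : ℕ) + 1) hw hv
  rw [Finset.prod_congr rfl fun j _ => (hasSum_poisson_mul_pow _ _).tsum_eq, ← Real.exp_sum] at h
  have hexponent : -(s * ∑ j : Fin k, lam j * (1 - v ^ ((j : ℕ) + 1)))
      = ∑ j : Fin k, -(lam j * s * (1 - v ^ ((j : ℕ) + 1))) := by
    rw [Finset.mul_sum, ← Finset.sum_neg_distrib]
    exact Finset.sum_congr rfl fun j _ => by ring
  rwa [hexponent]

theorem hasSum_pmfConv_mul_pow {a : ℕ → ℝ} (ha : Summable fun i => |a i|) (J : ℕ) {v : ℝ}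
    (hv : |v| ≤ 1) :
    HasSum (fun i => pmfConv a J i * v ^ i) ((∑' i, a i * v ^ i) ^ J) := by
  have h := hasSum_tsum_linear_fiber_mul_pow (K := J) (fun _ => 1) (fun _ => ha) hv
  simp only [one_mul, pow_one, Finset.prod_const, Finset.card_univ, Fintype.card_fin] at h
  exact h

theorem tsum_pmfConv_succ_mul_one_sub_pow {a : ℕ → ℝ} (ha : HasSum a 1)
    (ha0 : ∀ i, 0 ≤ a i) (J : ℕ) {u : ℝ} (hu : |u| ≤ 1) :
    ∑' i, pmfConv a J (i + 1) * (1 - u ^ (i + 1)) = 1 - (∑' i, a i * u ^ i) ^ J := by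
  have habs : Summable fun i => |a i| := by simpa [abs_of_nonneg (ha0 _)] using ha.summable
  have hone := hasSum_pmfConv_mul_pow habs J (v := 1) (by simp)
  simp only [one_pow, mul_one, ha.tsum_eq] at hone
  have hdiff := hone.sub (hasSum_pmfConv_mul_pow habs J hu)
  simp only [← mul_one_sub] at hdiff
  rw [((hasSum_nat_add_iff' 1).mpr hdiff).tsum_eq]
  simp

theorem hasSum_tsum_mul_mul_pow_of_hasSum_pow {G : ℕ → ℕ → ℝ} {H : ℕ → ℝ} {v z : ℝ}
    (hv : |v| ≤ 1) (hG0 : ∀ m s, 0 ≤ G m s) (hG1 : ∀ s, HasSum (G · s) 1)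
    (hGv : ∀ s, HasSum (fun m => G m s * v ^ m) (z ^ s)) (hH0 : ∀ s, 0 ≤ H s)
    (hH : Summable H) :
    HasSum (fun m => (∑' s, G m s * H s) * v ^ m) (∑' s, H s * z ^ s) := by
  have hQ : Summable fun p : ℕ × ℕ => G p.2 p.1 * H p.1 := by
    have hQ0 : 0 ≤ fun p : ℕ × ℕ => G p.2 p.1 * H p.1 := fun p =>
      mul_nonneg (hG0 p.2 p.1) (hH0 p.1)
    refine (summable_prod_of_nonneg hQ0).2
      ⟨fun s => (hG1 s).summable.mul_right (H s), hH.congr fun s => ?_⟩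
    dsimp only
    rw [tsum_mul_right, (hG1 s).tsum_eq, one_mul]
  set F : ℕ × ℕ → ℝ := fun p => G p.2 p.1 * H p.1 * v ^ p.2
  have hF : Summable F := by
    refine Summable.of_norm_bounded hQ fun p => ?_
    rw [Real.norm_eq_abs, abs_mul, abs_of_nonneg (mul_nonneg (hG0 _ _) (hH0 _)), abs_pow]
    exact mul_le_of_le_one_right (mul_nonneg (hG0 _ _) (hH0 _)) (pow_le_one₀ (abs_nonneg v) hv)
  have hfiber (s : ℕ) : HasSum (fun m => F (s, m)) (H s * z ^ s) := by
    have h := (hGv s).mul_left (H s)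
    exact h.congr_fun fun m => by ring
  have htotal : HasSum F (∑' s, H s * z ^ s) := by
    have h := hF.hasSum.prod_fiberwise hfiber
    rw [h.tsum_eq]
    exact hF.hasSum
  have hswap := (Equiv.prodComm ℕ ℕ).hasSum_iff.2 htotal
  refine (hswap.prod_fiberwise fun m => (hswap.summable.prod_factor m).hasSum).congr_fun
    fun m => ?_
  simp only [F, Function.comp_apply, Equiv.prodComm_apply, Prod.fst_swap, Prod.snd_swap]
  exact tsum_mul_right.symm

theorem gcpPmf_nonneg {k : ℕ} {lam : Fin k → ℝ} (hlam : ∀ j, 0 ≤ lam j) (n : ℕ) {t : ℝ}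
    (ht : 0 ≤ t) : 0 ≤ gcpPmf k lam n t :=
  tsum_nonneg fun x => by
    split_ifs
    · exact Finset.prod_nonneg fun j _ => by have := hlam j; positivity
    · exact le_rfl

theorem igcpPmf_nonneg {k : ℕ} {lam : Fin k → ℝ} (hlam : ∀ j, 0 ≤ lam j) {k0 : ℕ}
    {mu : Fin k0 → ℝ} (hmu : ∀ j0, 0 ≤ mu j0) (n : ℕ) {t : ℝ} (ht : 0 ≤ t) :
    0 ≤ igcpPmf k lam k0 mu n t :=
  tsum_nonneg fun s => mul_nonneg (gcpPmf_nonneg hlam n s.cast_nonneg) (gcpPmf_nonneg hmu s ht)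

theorem hasSum_gcpPmf_one {k : ℕ} (lam : Fin k → ℝ) (s : ℝ) :
    HasSum (fun n => gcpPmf k lam n s) 1 := by
  simpa using hasSum_gcpPmf_mul_pow lam s (v := 1) (by simp)

theorem hasSum_igcpPmf_mul_pow {k : ℕ} {lam : Fin k → ℝ} (hlam : ∀ j, 0 ≤ lam j)
    {k0 : ℕ} {mu : Fin k0 → ℝ} (hmu : ∀ j0, 0 ≤ mu j0) {t : ℝ} (ht : 0 ≤ t)
    {v : ℝ} (hv : |v| ≤ 1) :
    HasSum (fun m => igcpPmf k lam k0 mu m t * v ^ m)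
      (Real.exp (-(t * ∑ j0 : Fin k0, mu j0 * (1 - Real.exp (-(((j0 : ℕ) + 1 : ℝ) *
        ∑ j : Fin k, lam j * (1 - v ^ ((j : ℕ) + 1)))))))) := by
  set c := ∑ j : Fin k, lam j * (1 - v ^ ((j : ℕ) + 1))
  have hc : 0 ≤ c := Finset.sum_nonneg fun j _ => mul_nonneg (hlam j) (sub_nonneg.2
    ((le_abs_self _).trans (by rw [abs_pow]; exact pow_le_one₀ (abs_nonneg v) hv)))
  have hz : |Real.exp (-c)| ≤ 1 := by
    rw [abs_of_pos (Real.exp_pos _), Real.exp_le_one_iff]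
    linarith
  have hsub := hasSum_tsum_mul_mul_pow_of_hasSum_pow (z := Real.exp (-c)) hv
    (fun m s => gcpPmf_nonneg hlam m s.cast_nonneg) (fun s => hasSum_gcpPmf_one lam s)
    (fun s => by simpa [← Real.exp_nat_mul] using hasSum_gcpPmf_mul_pow lam s hv)
    (fun s => gcpPmf_nonneg hmu s ht) (hasSum_gcpPmf_one mu t).summable
  rw [(hasSum_gcpPmf_mul_pow mu t hz).tsum_eq] at hsub
  simp only [← Real.exp_nat_mul, mul_neg] at hsub
  push_cast at hsub
  exact hsub

section Compound

variable {Ω : Type*} [MeasurableSpace Ω] {P : Measure Ω} [IsProbabilityMeasure P]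

theorem integral_pow_eq_tsum {Y : Ω → ℕ} (hY : Measurable Y) {a : ℕ → ℝ} (ha0 : ∀ i, 0 ≤ a i)
    (hdist : ∀ i, P {ω | Y ω = i} = ENNReal.ofReal (a i)) {u : ℝ} (hu : |u| ≤ 1) :
    ∫ ω, u ^ Y ω ∂P = ∑' i, a i * u ^ i := by
  have : IsProbabilityMeasure (P.map Y) := Measure.isProbabilityMeasure_map hY.aemeasurable
  have hint : Integrable (fun i : ℕ => u ^ i) (P.map Y) :=
    .of_bound (measurable_of_countable _).aestronglyMeasurable 1 (ae_of_all _ fun i => by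
      rw [Real.norm_eq_abs, abs_pow]; exact pow_le_one₀ (abs_nonneg u) hu)
  rw [← integral_map hY.aemeasurable (measurable_of_countable _).aestronglyMeasurable,
    integral_countable hint]
  refine tsum_congr fun i => ?_
  rw [measureReal_def, Measure.map_apply hY (measurableSet_singleton i)]
  change (P {ω | Y ω = i}).toReal • _ = _
  rw [hdist i, ENNReal.toReal_ofReal (ha0 i), smul_eq_mul]

theorem setIntegral_pow_sum_range {M : Ω → ℕ} {X : ℕ → Ω → ℕ} (hM : Measurable M)
    (hX : ∀ n, Measurable (X n)) (hindep : iIndepFun (fun o : Option ℕ => o.elim M X) P)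
    {a : ℕ → ℝ} (ha0 : ∀ i, 0 ≤ a i) (hXdist : ∀ n i, P {ω | X n ω = i} = ENNReal.ofReal (a i))
    {u : ℝ} (hu : |u| ≤ 1) (m : ℕ) :
    ∫ ω in {ω | M ω = m}, u ^ (∑ n ∈ Finset.range m, X n ω) ∂P
      = P.real {ω | M ω = m} * (∑' i, a i * u ^ i) ^ m := by
  let f : Option (Fin m) → ℕ → ℝ := fun o => o.elim (Set.indicator {m} 1) fun _ i => u ^ i
  have hindep_m := hindep.precomp (Option.map_injective (Fin.val_injective (n := m)))
  have hmeas (o : Option (Fin m)) : Measurable ((o.map Fin.val).elim M X) := by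
    cases o with
    | none => exact hM
    | some n => exact hX n
  have hprod := hindep_m.integral_fun_prod_comp (f := f) (fun o => (hmeas o).aemeasurable)
    fun o => (measurable_of_countable _).aestronglyMeasurable
  simp only [Fintype.prod_option, f, Option.map_none, Option.map_some, Option.elim_none,
    Option.elim_some] at hprod
  have hA : MeasurableSet {ω | M ω = m} := hM (measurableSet_singleton m)
  have hindicator : (fun ω => Set.indicator {m} (1 : ℕ → ℝ) (M ω))
      = fun ω => Set.indicator {ω | M ω = m} (1 : Ω → ℝ) ω := by
    funext ω
    simp [Set.indicator_apply]
  calc ∫ ω in {ω | M ω = m}, u ^ (∑ n ∈ Finset.range m, X n ω) ∂P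
      = ∫ ω, Set.indicator {m} (1 : ℕ → ℝ) (M ω) * ∏ i : Fin m, u ^ X i ω ∂P := by
        rw [← integral_indicator hA]
        refine integral_congr_ae (ae_of_all _ fun ω => ?_)
        by_cases h : M ω = m
        · simp [h, Finset.prod_pow_eq_pow_sum, Fin.sum_univ_eq_sum_range (fun n => X n ω)]
        · simp [h]
    _ = P.real {ω | M ω = m} * (∑' i, a i * u ^ i) ^ m := by
        rw [hprod, hindicator, integral_indicator_one hA]
        simp [integral_pow_eq_tsum (hX _) ha0 (hXdist _) hu]

theorem integral_pow_sum_range_eq_tsum {M : Ω → ℕ} {X : ℕ → Ω → ℕ} (hM : Measurable M)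
    (hX : ∀ n, Measurable (X n)) (hindep : iIndepFun (fun o : Option ℕ => o.elim M X) P)
    {a : ℕ → ℝ} (ha0 : ∀ i, 0 ≤ a i) (hXdist : ∀ n i, P {ω | X n ω = i} = ENNReal.ofReal (a i))
    {u : ℝ} (hu : |u| ≤ 1) :
    ∫ ω, u ^ (∑ n ∈ Finset.range (M ω), X n ω) ∂P
      = ∑' m, P.real {ω | M ω = m} * (∑' i, a i * u ^ i) ^ m := by
  have hmeas : Measurable fun ω => u ^ (∑ n ∈ Finset.range (M ω), X n ω) := by
    have h : Measurable fun p : ℕ × Ω => u ^ (∑ n ∈ Finset.range p.1, X n p.2) :=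
      measurable_from_prod_countable_right fun m =>
        (measurable_of_countable (u ^ ·)).comp
          (Finset.measurable_sum (Finset.range m) fun n _ => hX n)
    exact h.comp (hM.prodMk measurable_id)
  have hint : Integrable (fun ω => u ^ (∑ n ∈ Finset.range (M ω), X n ω)) P :=
    .of_bound hmeas.aestronglyMeasurable 1 (ae_of_all _ fun ω => by
      rw [Real.norm_eq_abs, abs_pow]; exact pow_le_one₀ (abs_nonneg u) hu)
  have hcover : ⋃ m, {ω | M ω = m} = Set.univ := Set.iUnion_eq_univ_iff.2 fun ω => ⟨M ω, rfl⟩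
  rw [← setIntegral_univ, ← hcover, integral_iUnion (s := fun m => {ω | M ω = m})
    (fun m => hM (measurableSet_singleton m)) (pairwise_disjoint_fiber M) hint.integrableOn]
  refine tsum_congr fun m => ?_
  rw [← setIntegral_pow_sum_range hM hX hindep ha0 hXdist hu m]
  exact setIntegral_congr_fun (hM (measurableSet_singleton m)) fun ω (hω : M ω = m) => by rw [hω]

end Compound

theorem abs_tsum_mul_pow_le_one {a : ℕ → ℝ} (ha : HasSum a 1) (ha0 : ∀ i, 0 ≤ a i) {u : ℝ}
    (hu : |u| ≤ 1) : |∑' i, a i * u ^ i| ≤ 1 := by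
  have hbound (i : ℕ) : ‖a i * u ^ i‖ ≤ a i := by
    rw [Real.norm_eq_abs, abs_mul, abs_of_nonneg (ha0 i), abs_pow]
    exact mul_le_of_le_one_right (ha0 i) (pow_le_one₀ (abs_nonneg u) hu)
  calc |∑' i, a i * u ^ i| ≤ ∑' i, a i := tsum_of_norm_bounded ha.summable.hasSum hbound
    _ = 1 := ha.tsum_eq

theorem compound_igcp_pgf_general {Ω : Type*} [MeasurableSpace Ω] (P : Measure Ω)
    [IsProbabilityMeasure P]
    (k : ℕ) (lam : Fin k → ℝ) (hlam : ∀ j, 0 < lam j)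
    (k0 : ℕ) (mu : Fin k0 → ℝ) (hmu : ∀ j0, 0 < mu j0)
    (t : ℝ) (ht : 0 ≤ t)
    (a : ℕ → ℝ) (ha0 : ∀ i, 0 ≤ a i) (ha1 : ∑' i : ℕ, a i = 1)
    (X : ℕ → Ω → ℕ) (Mhat : Ω → ℕ)
    (hXmeas : ∀ n, Measurable (X n)) (hMmeas : Measurable Mhat)
    (hXdist : ∀ n : ℕ, ∀ i : ℕ, P {ω | X n ω = i} = ENNReal.ofReal (a i))
    (hMdist : ∀ m : ℕ, P {ω | Mhat ω = m} = ENNReal.ofReal (igcpPmf k lam k0 mu m t))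
    (hindep : iIndepFun
      (fun o : Option ℕ => o.elim Mhat X) P)
    (u : ℝ) (hu : |u| ≤ 1) :
    ∫ ω, u ^ (∑ n ∈ Finset.range (Mhat ω), X n ω) ∂P =
      Real.exp (-(t * ∑ j0 : Fin k0, mu j0 *
        (1 - Real.exp (-(((j0 : ℕ) + 1 : ℝ) *
          ∑ j : Fin k, lam j *
            ∑' i : ℕ, pmfConv a ((j : ℕ) + 1) (i + 1) * (1 - u ^ (i + 1))))))) := by
  have ha : HasSum a 1 := by
    have hsum : Summable a := by
      by_contra h
      simp [tsum_eq_zero_of_not_summable h] at ha1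
    exact ha1 ▸ hsum.hasSum
  have hlam0 (j : Fin k) : 0 ≤ lam j := (hlam j).le
  have hmu0 (j0 : Fin k0) : 0 ≤ mu j0 := (hmu j0).le
  have hMreal (m : ℕ) : P.real {ω | Mhat ω = m} = igcpPmf k lam k0 mu m t := by
    rw [measureReal_def, hMdist m, ENNReal.toReal_ofReal (igcpPmf_nonneg hlam0 hmu0 m ht)]
  simp only [tsum_pmfConv_succ_mul_one_sub_pow ha ha0 _ hu]
  rw [integral_pow_sum_range_eq_tsum hMmeas hXmeas hindep ha0 hXdist hu]
  simp only [hMreal]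
  exact (hasSum_igcpPmf_mul_pow hlam0 hmu0 ht (abs_tsum_mul_pow_le_one ha ha0 hu)).tsum_eq

/-- the probability generating function of the compound IGCP
`D = ∑_{n=1}^{M̂} X_n`, where the `X_n` are i.i.d. with pmf `a` and `M̂` is distributed
as the IGCP at time `t`, independent of `(X_n)`. -/
theorem compound_igcp_pgf {Ω : Type*} [MeasurableSpace Ω] (P : Measure Ω)
    [IsProbabilityMeasure P]
    (k : ℕ) (hk : 0 < k) (lam : Fin k → ℝ) (hlam : ∀ j, 0 < lam j)
    (k0 : ℕ) (hk0 : 0 < k0) (mu : Fin k0 → ℝ) (hmu : ∀ j0, 0 < mu j0)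
    (t : ℝ) (ht : 0 ≤ t)
    (a : ℕ → ℝ) (ha0 : ∀ i, 0 ≤ a i) (ha1 : ∑' i : ℕ, a i = 1)
    (X : ℕ → Ω → ℕ) (Mhat : Ω → ℕ)
    (hXmeas : ∀ n, Measurable (X n)) (hMmeas : Measurable Mhat)
    (hXdist : ∀ n : ℕ, ∀ i : ℕ, P {ω | X n ω = i} = ENNReal.ofReal (a i))
    (hMdist : ∀ m : ℕ, P {ω | Mhat ω = m} = ENNReal.ofReal (igcpPmf k lam k0 mu m t))
    (hindep : iIndepFun
      (fun o : Option ℕ => o.elim Mhat X) P)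
    (u : ℝ) (hu : |u| ≤ 1) :
    ∫ ω, u ^ (∑ n ∈ Finset.range (Mhat ω), X n ω) ∂P =
      Real.exp (-(t * ∑ j0 : Fin k0, mu j0 *
        (1 - Real.exp (-(((j0 : ℕ) + 1 : ℝ) *
          ∑ j : Fin k, lam j *
            ∑' i : ℕ, pmfConv a ((j : ℕ) + 1) (i + 1) * (1 - u ^ (i + 1))))))) :=
  compound_igcp_pgf_general P k lam hlam k0 mu hmu t ht a ha0 ha1 X Mhat hXmeas hMmeas hXdist hMdist
    hindep u hu
end
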